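/- arXiv:0706.0333 — 2 statements merged into one kernel-verified Lean document; each statement's English description precedes it below -/
import Mathlib

section
/- Let j ≥ 1 and let W_j be a random variable with density (4^{j−1}((j−1)!)²/(π(2j−2)!)) cos^{2(j−1)}(v) on (−π/2, π/2). Then for every real s with |s| < 1, E[e^{i s W_j}] = Γ(j)² / ( Γ(j + s/2) Γ(j − s/2) ). -/
/-!
Let `Iₙ = ∫_{-π/2}^{π/2} e^{isv} cosⁿ v dv`. Two integrations by parts, whose boundary terms
vanish because `cos (±π/2) = 0`, give `((n+2)² - s²) Iₙ₊₂ = (n+2)(n+1) Iₙ`. By the reflection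
formula `I₀ = 2 sin(πs/2)/s = π / (Γ(1+s/2) Γ(1-s/2))`, so `Γ(x+1) = x Γ(x)` solves the recursion:
`I₂ₘ = π (2m)! / (4^m Γ(m+1+s/2) Γ(m+1-s/2))` for `|s| < 2`. The normalising constant of `W_j`
turns `I₂₍ⱼ₋₁₎` into `Γ(j)² / (Γ(j+s/2) Γ(j-s/2))`.
-/

open MeasureTheory ProbabilityTheory

/-- The law of `W_j`: density `(4^{j-1}((j-1)!)²/(π(2j-2)!)) cos^{2(j-1)}(v)` on
`(-π/2, π/2)`. -/
noncomputable def wMeasure (j : ℕ) : Measure ℝ :=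
  volume.withDensity fun v => ENNReal.ofReal
    (Set.indicator (Set.Ioo (-(Real.pi / 2)) (Real.pi / 2))
      (fun u => 4 ^ (j - 1) * (Nat.factorial (j - 1) : ℝ) ^ 2 /
        (Real.pi * (Nat.factorial (2 * j - 2) : ℝ)) * Real.cos u ^ (2 * (j - 1))) v)

open Real Complex Nat

theorem integral_cexp_mul_deriv_of_eq_zero (s : ℝ) {a b : ℝ} {g g' : ℝ → ℝ}
    (hg : ∀ x, HasDerivAt g (g' x) x) (hg' : Continuous g') (ha : g a = 0) (hb : g b = 0) :
    ∫ v in a..b, cexp (I * s * v) * (g' v : ℂ)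
      = -(I * s) * ∫ v in a..b, cexp (I * s * v) * (g v : ℂ) := by
  have hexp (x : ℝ) : HasDerivAt (fun v : ℝ => cexp (I * s * v)) (I * s * cexp (I * s * x)) x := by
    simpa [mul_comm] using ((hasDerivAt_id (x : ℂ)).const_mul (I * s)).cexp.comp_ofReal
  rw [intervalIntegral.integral_mul_deriv_eq_deriv_mul (fun x _ => hexp x)
    (fun x _ => (hg x).ofReal_comp) (by apply Continuous.intervalIntegrable; fun_prop)
    (by apply Continuous.intervalIntegrable; fun_prop)]
  simp [ha, hb, mul_assoc, intervalIntegral.integral_const_mul]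

noncomputable def cosPowFourier (s : ℝ) (n : ℕ) : ℂ :=
  ∫ v in -(π / 2)..π / 2, cexp (I * s * v) * (Real.cos v ^ n : ℝ)

theorem hasDerivAt_cos_pow_mul_sin (n : ℕ) (x : ℝ) :
    HasDerivAt (fun v => Real.cos v ^ (n + 1) * Real.sin v)
      (((n : ℝ) + 2) * Real.cos x ^ (n + 2) - ((n : ℝ) + 1) * Real.cos x ^ n) x := by
  refine (((Real.hasDerivAt_cos x).pow (n + 1)).mul (Real.hasDerivAt_sin x)).congr_deriv ?_
  simp only [Nat.add_sub_cancel, Pi.pow_apply]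
  push_cast
  linear_combination (-(n + 1 : ℝ)) * Real.cos x ^ n * Real.sin_sq_add_cos_sq x

theorem cosPowFourier_add_two (s : ℝ) (n : ℕ) :
    (((n : ℂ) + 2) ^ 2 - s ^ 2) * cosPowFourier s (n + 2)
      = ((n : ℂ) + 2) * (n + 1) * cosPowFourier s n := by
  have hcos : Real.cos (π / 2) = 0 := Real.cos_pi_div_two
  have hcos' : Real.cos (-(π / 2)) = 0 := by rw [Real.cos_neg, hcos]
  set J := ∫ v in -(π / 2)..π / 2, cexp (I * s * v) * (Real.cos v ^ (n + 1) * Real.sin v : ℝ)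
    with hJ
  have hcos_int (k : ℕ) : IntervalIntegrable (fun v : ℝ => cexp (I * s * v) * (Real.cos v ^ k : ℝ))
      volume (-(π / 2)) (π / 2) := by
    apply Continuous.intervalIntegrable; fun_prop
  have hparts_cos : ((n : ℂ) + 2) * J = I * s * cosPowFourier s (n + 2) := by
    have hderiv (x : ℝ) : HasDerivAt (fun v => Real.cos v ^ (n + 2))
        (-((n + 2) * (Real.cos x ^ (n + 1) * Real.sin x))) x :=
      ((Real.hasDerivAt_cos x).pow (n + 2)).congr_deriv (by push_cast; ring)
    have hL : ∫ v in -(π / 2)..π / 2,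
        cexp (I * s * v) * ((-((n + 2) * (Real.cos v ^ (n + 1) * Real.sin v)) : ℝ) : ℂ)
          = -((n + 2) * J) := by
      rw [hJ, ← intervalIntegral.integral_const_mul, ← intervalIntegral.integral_neg]
      congr 1 with v
      push_cast
      ring
    have hparts := integral_cexp_mul_deriv_of_eq_zero s (a := -(π / 2)) (b := π / 2) hderiv
      (by fun_prop) (by simp [hcos']) (by simp [hcos])
    rw [hL] at hparts
    rw [cosPowFourier]
    linear_combination -hparts
  have hparts_cos_sin : ((n : ℂ) + 2) * cosPowFourier s (n + 2) - (n + 1) * cosPowFourier s n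
      = -(I * s) * J := by
    rw [← integral_cexp_mul_deriv_of_eq_zero s (hasDerivAt_cos_pow_mul_sin n) (by fun_prop)
      (by simp [hcos']) (by simp [hcos]), cosPowFourier, cosPowFourier,
      ← intervalIntegral.integral_const_mul, ← intervalIntegral.integral_const_mul,
      ← intervalIntegral.integral_sub ((hcos_int _).const_mul _) ((hcos_int _).const_mul _)]
    congr 1 with v
    push_cast
    ring
  linear_combination ((n : ℂ) + 2) * hparts_cos_sin - I * s * hparts_cos
    - (s : ℂ) ^ 2 * cosPowFourier s (n + 2) * I_sq

theorem pi_div_Gamma_one_add_mul_Gamma_one_sub {s : ℝ} (hs : s ≠ 0) :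
    π / (Real.Gamma (1 + s / 2) * Real.Gamma (1 - s / 2))
      = 2 * Real.sin (π * (s / 2)) / s := by
  rw [add_comm, Real.Gamma_add_one (div_ne_zero hs two_ne_zero), mul_assoc,
    Real.Gamma_mul_Gamma_one_sub]
  rcases eq_or_ne (Real.sin (π * (s / 2))) 0 with h | h
  · -- even `s`: the sine vanishes and `Γ (1 - s/2)` sits on a pole, where Mathlib's `Γ` is 0
    simp [h]
  · field_simp

theorem cosPowFourier_zero (s : ℝ) :
    cosPowFourier s 0 = (π / (Real.Gamma (1 + s / 2) * Real.Gamma (1 - s / 2)) : ℝ) := by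
  rcases eq_or_ne s 0 with rfl | hs
  · simp [cosPowFourier]
  have hIs : I * s ≠ 0 := mul_ne_zero I_ne_zero (ofReal_ne_zero.mpr hs)
  simp only [cosPowFourier, pow_zero, ofReal_one, mul_one]
  rw [integral_exp_mul_complex hIs, pi_div_Gamma_one_add_mul_Gamma_one_sub hs]
  have hexp (x : ℝ) : cexp (I * s * x) = Real.cos (s * x) + Real.sin (s * x) * I := by
    rw [show I * s * x = ((s * x : ℝ) : ℂ) * I by push_cast; ring, exp_mul_I, ← ofReal_cos,
      ← ofReal_sin]
  rw [hexp, hexp]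
  simp only [mul_neg, Real.cos_neg, Real.sin_neg]
  field_simp
  push_cast
  ring

theorem cosPowFourier_two_mul {s : ℝ} (hs : |s| < 2) (m : ℕ) :
    cosPowFourier s (2 * m) = (π * (2 * m)! /
      (4 ^ m * Real.Gamma (m + 1 + s / 2) * Real.Gamma (m + 1 - s / 2)) : ℝ) := by
  induction m with
  | zero => simpa using cosPowFourier_zero s
  | succ m ih =>
    obtain ⟨hs₁, hs₂⟩ := abs_lt.mp hs
    have hm : (0 : ℝ) ≤ m := m.cast_nonneg
    have hpos₁ : 0 < (m : ℝ) + 1 + s / 2 := by linarith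
    have hpos₂ : 0 < (m : ℝ) + 1 - s / 2 := by linarith
    have hcoef : (((2 * m : ℕ) : ℂ) + 2) ^ 2 - (s : ℂ) ^ 2 ≠ 0 := by
      exact_mod_cast (show (((2 * m : ℕ) : ℝ) + 2) ^ 2 - s ^ 2 ≠ 0 by push_cast; nlinarith)
    have key : (((2 * m : ℕ) : ℝ) + 2) * (((2 * m : ℕ) : ℝ) + 1) * (π * (2 * m)! /
          (4 ^ m * Real.Gamma (m + 1 + s / 2) * Real.Gamma (m + 1 - s / 2)))
        = ((((2 * m : ℕ) : ℝ) + 2) ^ 2 - s ^ 2) * (π * (2 * m + 2)! /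
          (4 ^ (m + 1) * Real.Gamma ((m + 1 : ℕ) + 1 + s / 2) *
            Real.Gamma ((m + 1 : ℕ) + 1 - s / 2))) := by
      rw [Nat.factorial_succ, Nat.factorial_succ]
      push_cast
      rw [show (m : ℝ) + 1 + 1 + s / 2 = m + 1 + s / 2 + 1 by ring,
        show (m : ℝ) + 1 + 1 - s / 2 = m + 1 - s / 2 + 1 by ring,
        Real.Gamma_add_one hpos₁.ne', Real.Gamma_add_one hpos₂.ne', mul_div_assoc',
        mul_div_assoc', div_eq_div_iff (by positivity) (by positivity)]
      ring
    rw [show 2 * (m + 1) = 2 * m + 2 by ring]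
    apply mul_left_cancel₀ hcoef
    rw [cosPowFourier_add_two, ih]
    exact_mod_cast key

theorem integral_withDensity_ofReal_indicator {α E : Type*} [MeasurableSpace α]
    [NormedAddCommGroup E] [NormedSpace ℝ E] {μ : Measure α} {S : Set α} (hS : MeasurableSet S)
    {h : α → ℝ} (hm : Measurable h) (hnn : ∀ x ∈ S, 0 ≤ h x) (f : α → E) :
    ∫ x, f x ∂μ.withDensity (fun x => ENNReal.ofReal (S.indicator h x))
      = ∫ x in S, h x • f x ∂μ := by
  rw [integral_withDensity_eq_integral_toReal_smul (hm.indicator hS).ennreal_ofReal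
    (ae_of_all _ fun _ => ENNReal.ofReal_lt_top), ← integral_indicator hS]
  congr 1 with x
  by_cases hx : x ∈ S
  · simp [hx, hnn x hx]
  · simp [hx]

theorem integral_wMeasure (j : ℕ) (f : ℝ → ℂ) :
    ∫ v, f v ∂wMeasure j = (4 ^ (j - 1) * (j - 1)! ^ 2 / (π * (2 * j - 2)!) : ℝ) *
      ∫ v in -(π / 2)..π / 2, f v * (Real.cos v ^ (2 * (j - 1)) : ℝ) := by
  rw [wMeasure, integral_withDensity_ofReal_indicator measurableSet_Ioo (by fun_prop)
    (fun _ _ => mul_nonneg (by positivity) ((even_two_mul _).pow_nonneg _)),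
    ← integral_Ioc_eq_integral_Ioo, ← intervalIntegral.integral_of_le (by linarith [pi_pos]),
    ← intervalIntegral.integral_const_mul]
  congr 1 with v
  rw [real_smul]
  push_cast
  ring

/-- Fourier transform of `W_j`:
`E[e^{isW_j}] = Γ(j)² / (Γ(j+s/2)Γ(j-s/2))` for `|s| < 1`. -/
theorem statement12 {j : ℕ} (hj : 1 ≤ j) (s : ℝ) (hs : |s| < 1) :
    ∫ v, Complex.exp (Complex.I * (s : ℂ) * (v : ℂ)) ∂(wMeasure j)
      = ((Real.Gamma j ^ 2 /
          (Real.Gamma (j + s / 2) * Real.Gamma (j - s / 2)) : ℝ) : ℂ) := by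
  obtain ⟨m, rfl⟩ : ∃ m, j = m + 1 := ⟨j - 1, by omega⟩
  rw [integral_wMeasure, Nat.add_sub_cancel, show 2 * (m + 1) - 2 = 2 * m by omega,
    ← cosPowFourier, cosPowFourier_two_mul (by linarith) m, ← ofReal_mul]
  congr 1
  push_cast
  rw [Real.Gamma_nat_eq_factorial]
  field_simp
end

section
/- Let j ≥ 1, let β_{j,j−1} have the Beta(j, j−1) distribution (with Beta(1,0) the Dirac mass at 1) and, independently, let W_j have density (4^{j−1}((j−1)!)²/(π(2j−2)!)) cos^{2(j−1)}(v) on (−π/2, π/2). Set T_j := log(β_{j,j−1} · 2 cos(W_j)). Then for every real t > −1, E[e^{t T_j}] = Γ(j) Γ(j+t) / Γ(j + t/2)². -/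
open MeasureTheory ProbabilityTheory

/-- The `Beta(a,b)` probability measure on `[0,1]`. -/
noncomputable def betaMeasure (a b : ℝ) : Measure ℝ :=
  volume.withDensity fun t => ENNReal.ofReal
    (Set.indicator (Set.Ioo 0 1)
      (fun u => Real.Gamma (a + b) / (Real.Gamma a * Real.Gamma b) *
        u ^ (a - 1) * (1 - u) ^ (b - 1)) t)

/-!
By independence, `E[e^{tT}] = E[β^t] · E[(2 cos W)^t]`. The first factor is a ratio of Beta
functions. In the second, the substitution `u = (1 + sin v) / 2`, for which
`u (1 - u) = (cos v / 2)²`, turns `∫ cos^s` over `(-π/2, π/2)` into `2^s B((s+1)/2, (s+1)/2)`,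
and Legendre's duplication formula rewrites this as `π Γ(s+1) / (2^s Γ(s/2+1)²)`. In the
product of the two factors, `Γ(2j-1)` and `Γ(2j-1+t)` cancel.
-/

open Set Real
open scoped Nat

section WithDensity

variable {α : Type*} [MeasurableSpace α] {μ : Measure α} {S : Set α}

lemma withDensity_ofReal_indicator (hS : MeasurableSet S) (d : α → ℝ) :
    μ.withDensity (fun x => ENNReal.ofReal (S.indicator d x))
      = (μ.restrict S).withDensity (fun x => ENNReal.ofReal (d x)) := by
  rw [← withDensity_indicator hS]
  congr 1
  exact (indicator_comp_of_zero ENNReal.ofReal_zero).symm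

lemma ae_mem_withDensity_ofReal_indicator (hS : MeasurableSet S) (d : α → ℝ) :
    ∀ᵐ x ∂μ.withDensity (fun x => ENNReal.ofReal (S.indicator d x)), x ∈ S := by
  rw [withDensity_ofReal_indicator hS]
  exact (withDensity_absolutelyContinuous _ _).ae_le (ae_restrict_mem hS)

lemma integral_withDensity_ofReal_indicator_s13 (hS : MeasurableSet S) {d : α → ℝ}
    (hd : AEMeasurable d (μ.restrict S)) (hd_nonneg : ∀ x ∈ S, 0 ≤ d x) (g : α → ℝ) :
    ∫ x, g x ∂μ.withDensity (fun x => ENNReal.ofReal (S.indicator d x))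
      = ∫ x in S, d x * g x ∂μ := by
  rw [withDensity_ofReal_indicator hS, integral_withDensity_eq_integral_toReal_smul₀
    hd.ennreal_ofReal (ae_of_all _ fun _ => ENNReal.ofReal_lt_top)]
  refine setIntegral_congr_fun hS fun x hx => ?_
  rw [ENNReal.toReal_ofReal (hd_nonneg x hx), smul_eq_mul]

end WithDensity

lemma integral_Ioo_rpow_mul_one_sub_rpow {a b : ℝ} (ha : 0 < a) (hb : 0 < b) :
    ∫ x in Ioo 0 1, x ^ (a - 1) * (1 - x) ^ (b - 1) = Gamma a * Gamma b / Gamma (a + b) := by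
  have hbeta : Complex.betaIntegral a b
      = ↑(∫ x in (0 : ℝ)..1, x ^ (a - 1) * (1 - x) ^ (b - 1)) := by
    rw [Complex.betaIntegral, ← intervalIntegral.integral_ofReal]
    refine intervalIntegral.integral_congr fun x hx => ?_
    rw [uIcc_of_le zero_le_one] at hx
    push_cast [Complex.ofReal_cpow hx.1, Complex.ofReal_cpow (sub_nonneg.2 hx.2)]
    rfl
  have h := Complex.betaIntegral_eq_Gamma_mul_div a b (by simpa) (by simpa)
  rw [hbeta, ← Complex.ofReal_add, Complex.Gamma_ofReal, Complex.Gamma_ofReal,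
    Complex.Gamma_ofReal] at h
  rw [← integral_Ioc_eq_integral_Ioo, ← intervalIntegral.integral_of_le zero_le_one]
  exact_mod_cast h

lemma betaMeasure_eq_betaMeasure (a b : ℝ) :
    _root_.betaMeasure a b = ProbabilityTheory.betaMeasure a b := by
  unfold _root_.betaMeasure ProbabilityTheory.betaMeasure
  congr 1 with x
  simp only [betaPDF, betaPDFReal, ProbabilityTheory.beta, indicator, mem_Ioo, one_div_div]

lemma ae_pos_betaMeasure (a b : ℝ) : ∀ᵐ x ∂_root_.betaMeasure a b, 0 < x :=
  (ae_mem_withDensity_ofReal_indicator measurableSet_Ioo _).mono fun _ hx => hx.1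

lemma integral_rpow_betaMeasure {a b t : ℝ} (ha : 0 < a) (hb : 0 < b) (hat : 0 < a + t) :
    ∫ x, x ^ t ∂_root_.betaMeasure a b
      = Gamma (a + b) * Gamma (a + t) / (Gamma a * Gamma (a + b + t)) := by
  have hdensity : ∀ x ∈ Ioo (0 : ℝ) 1, 0 ≤ Gamma (a + b) / (Gamma a * Gamma b) *
      x ^ (a - 1) * (1 - x) ^ (b - 1) := fun x hx => by
    have := hx.1; have := sub_pos.2 hx.2; positivity
  rw [_root_.betaMeasure, integral_withDensity_ofReal_indicator_s13 measurableSet_Ioo (by fun_prop)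
    hdensity]
  have hshift : ∀ x ∈ Ioo (0 : ℝ) 1,
      Gamma (a + b) / (Gamma a * Gamma b) * x ^ (a - 1) * (1 - x) ^ (b - 1) * x ^ t
        = Gamma (a + b) / (Gamma a * Gamma b) * (x ^ (a + t - 1) * (1 - x) ^ (b - 1)) :=
    fun x hx => by rw [show a + t - 1 = a - 1 + t by ring, rpow_add hx.1]; ring
  rw [setIntegral_congr_fun measurableSet_Ioo hshift, integral_const_mul,
    integral_Ioo_rpow_mul_one_sub_rpow hat hb, show a + t + b = a + b + t by ring]
  have := (Gamma_pos_of_pos ha).ne'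
  have := (Gamma_pos_of_pos hb).ne'
  field_simp

lemma ae_pos_ite_dirac_betaMeasure (j : ℕ) :
    ∀ᵐ x ∂(if j = 1 then Measure.dirac 1 else _root_.betaMeasure j (j - 1 : ℕ)), 0 < x := by
  split_ifs
  · exact (ae_dirac_iff measurableSet_Ioi).2 one_pos
  · exact ae_pos_betaMeasure _ _

lemma isProbabilityMeasure_ite_dirac_betaMeasure {j : ℕ} (hj : 1 ≤ j) :
    IsProbabilityMeasure
      (if j = 1 then Measure.dirac 1 else _root_.betaMeasure j (j - 1 : ℕ)) := by
  split_ifs with hj1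
  · infer_instance
  · rw [betaMeasure_eq_betaMeasure]
    exact isProbabilityMeasureBeta (by positivity) (by simp; omega)

lemma integral_rpow_ite_dirac_betaMeasure {j : ℕ} (hj : 1 ≤ j) {t : ℝ} (ht : -1 < t) :
    ∫ x, x ^ t ∂(if j = 1 then Measure.dirac 1 else _root_.betaMeasure j (j - 1 : ℕ))
      = Gamma (2 * j - 1) * Gamma (j + t) / (Gamma j * Gamma (2 * j - 1 + t)) := by
  split_ifs with hj1
  · subst hj1
    have := (Gamma_pos_of_pos (show (0 : ℝ) < 1 + t by linarith)).ne'
    norm_num [integral_dirac, this]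
  · have hj2 : (2 : ℝ) ≤ j := by exact_mod_cast (by omega : 2 ≤ j)
    have hcast : ((j - 1 : ℕ) : ℝ) = j - 1 := by push_cast [Nat.cast_sub hj]; ring
    rw [integral_rpow_betaMeasure (by linarith) (by linarith) (by linarith), hcast]
    ring_nf

lemma image_one_add_sin_div_two_Ioo :
    (fun v => (1 + sin v) / 2) '' Ioo (-(π / 2)) (π / 2) = Ioo 0 1 := by
  refine Subset.antisymm (image_subset_iff.2 fun v hv => ?_) fun u hu => ?_
  · obtain ⟨h₁, h₂⟩ := mapsTo_sin_Ioo hv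
    exact ⟨by linarith, by linarith⟩
  · have h₁ : -1 < 2 * u - 1 := by linarith [hu.1]
    have h₂ : 2 * u - 1 < 1 := by linarith [hu.2]
    refine ⟨arcsin (2 * u - 1),
      ⟨neg_pi_div_two_lt_arcsin.2 h₁, arcsin_lt_pi_div_two.2 h₂⟩, ?_⟩
    simp only [sin_arcsin h₁.le h₂.le]
    ring

lemma two_rpow_mul_Gamma_sq_div_Gamma {s : ℝ} (hs : -1 < s) :
    2 ^ s * Gamma ((s + 1) / 2) ^ 2 / Gamma (s + 1)
      = π * Gamma (s + 1) / (2 ^ s * Gamma (s / 2 + 1) ^ 2) := by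
  have hdup := Gamma_mul_Gamma_add_half ((s + 1) / 2)
  rw [show (s + 1) / 2 + 1 / 2 = s / 2 + 1 by ring, show 2 * ((s + 1) / 2) = s + 1 by ring,
    show 1 - (s + 1) = -s by ring] at hdup
  have h1 : Gamma (s + 1) ≠ 0 := (Gamma_pos_of_pos (by linarith)).ne'
  have h2 : Gamma (s / 2 + 1) ≠ 0 := (Gamma_pos_of_pos (by linarith)).ne'
  have h2s : (2 : ℝ) ^ s * 2 ^ (-s) = 1 := by rw [← rpow_add two_pos, add_neg_cancel, rpow_zero]
  set A := Gamma ((s + 1) / 2)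
  set B := Gamma (s / 2 + 1)
  set C := Gamma (s + 1)
  field_simp
  linear_combination (A * B + C * 2 ^ (-s) * √π) * 2 ^ s * 2 ^ s * hdup
    + C ^ 2 * √π ^ 2 * (2 ^ s * 2 ^ (-s) + 1) * h2s + C ^ 2 * sq_sqrt pi_pos.le

lemma integral_cos_rpow_eq_two_rpow_mul_integral_Ioo (s : ℝ) :
    ∫ v in Ioo (-(π / 2)) (π / 2), cos v ^ s
      = 2 ^ s * ∫ u in Ioo 0 1, u ^ ((s + 1) / 2 - 1) * (1 - u) ^ ((s + 1) / 2 - 1) := by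
  set f : ℝ → ℝ := fun v => (1 + sin v) / 2
  have hf_deriv : ∀ v ∈ Ioo (-(π / 2)) (π / 2),
      HasDerivWithinAt f (cos v / 2) (Ioo (-(π / 2)) (π / 2)) v :=
    fun v _ => (((hasDerivAt_sin v).const_add 1).div_const 2).hasDerivWithinAt
  have hf_inj : InjOn f (Ioo (-(π / 2)) (π / 2)) := fun v hv w hw h =>
    injOn_sin (Ioo_subset_Icc_self hv) (Ioo_subset_Icc_self hw) (by simpa [f] using h)
  have hpullback : ∀ v ∈ Ioo (-(π / 2)) (π / 2),
      |cos v / 2| • (f v ^ ((s + 1) / 2 - 1) * (1 - f v) ^ ((s + 1) / 2 - 1))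
        = 2 ^ (-s) * cos v ^ s := by
    intro v hv
    have hc : 0 < cos v / 2 := half_pos (cos_pos_of_mem_Ioo hv)
    have hf : f v * (1 - f v) = (cos v / 2) ^ (2 : ℝ) := by
      rw [rpow_two]; simp only [f, div_pow, cos_sq']; ring
    have hf_nonneg : 0 ≤ f v := by simp only [f]; linarith [neg_one_le_sin v]
    have hf_le_one : 0 ≤ 1 - f v := by simp only [f]; linarith [sin_le_one v]
    calc |cos v / 2| • (f v ^ ((s + 1) / 2 - 1) * (1 - f v) ^ ((s + 1) / 2 - 1))
        = (cos v / 2) ^ (1 : ℝ) * ((cos v / 2) ^ (2 : ℝ)) ^ ((s + 1) / 2 - 1) := by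
          rw [smul_eq_mul, abs_of_pos hc, ← mul_rpow hf_nonneg hf_le_one, hf, rpow_one]
      _ = (cos v / 2) ^ s := by
          rw [← rpow_mul hc.le, ← rpow_add hc]; ring_nf
      _ = 2 ^ (-s) * cos v ^ s := by
          rw [div_rpow (cos_pos_of_mem_Ioo hv).le zero_le_two, rpow_neg zero_le_two,
            div_eq_inv_mul]
  rw [← image_one_add_sin_div_two_Ioo,
    integral_image_eq_integral_abs_deriv_smul measurableSet_Ioo hf_deriv hf_inj,
    setIntegral_congr_fun measurableSet_Ioo hpullback, integral_const_mul, ← mul_assoc,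
    ← rpow_add two_pos, add_neg_cancel, rpow_zero, one_mul]

lemma integral_cos_rpow {s : ℝ} (hs : -1 < s) :
    ∫ v in Ioo (-(π / 2)) (π / 2), cos v ^ s
      = π * Gamma (s + 1) / (2 ^ s * Gamma (s / 2 + 1) ^ 2) := by
  rw [integral_cos_rpow_eq_two_rpow_mul_integral_Ioo,
    integral_Ioo_rpow_mul_one_sub_rpow (by linarith) (by linarith),
    show (s + 1) / 2 + (s + 1) / 2 = s + 1 by ring, ← two_rpow_mul_Gamma_sq_div_Gamma hs]
  ring

lemma ae_mem_wMeasure (j : ℕ) : ∀ᵐ v ∂wMeasure j, v ∈ Ioo (-(π / 2)) (π / 2) :=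
  ae_mem_withDensity_ofReal_indicator measurableSet_Ioo _

lemma integral_two_mul_cos_rpow_wMeasure {j : ℕ} (hj : 1 ≤ j) {t : ℝ} (ht : -1 < t) :
    ∫ v, (2 * cos v) ^ t ∂wMeasure j
      = Gamma j ^ 2 * Gamma (2 * j - 1 + t) / (Gamma (2 * j - 1) * Gamma (j + t / 2) ^ 2) := by
  obtain ⟨n, rfl⟩ : ∃ n, j = n + 1 := ⟨j - 1, by omega⟩
  have hdensity : ∀ v ∈ Ioo (-(π / 2)) (π / 2),
      0 ≤ 4 ^ n * (n ! : ℝ) ^ 2 / (π * (2 * n)!) * cos v ^ (2 * n) := fun v hv => by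
    have := cos_pos_of_mem_Ioo hv; positivity
  rw [wMeasure, show n + 1 - 1 = n by omega, show 2 * (n + 1) - 2 = 2 * n by omega,
    integral_withDensity_ofReal_indicator_s13 measurableSet_Ioo (by fun_prop) hdensity]
  have hcollect : ∀ v ∈ Ioo (-(π / 2)) (π / 2),
      4 ^ n * (n ! : ℝ) ^ 2 / (π * (2 * n)!) * cos v ^ (2 * n) * (2 * cos v) ^ t
        = 4 ^ n * (n ! : ℝ) ^ 2 / (π * (2 * n)!) * 2 ^ t * cos v ^ ((2 * n : ℝ) + t) := by
    intro v hv
    have hc := cos_pos_of_mem_Ioo hv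
    rw [mul_rpow zero_le_two hc.le, rpow_add hc,
      show (2 * n : ℝ) = (2 * n : ℕ) by push_cast; ring, rpow_natCast]
    ring
  rw [setIntegral_congr_fun measurableSet_Ioo hcollect, integral_const_mul,
    integral_cos_rpow (by linarith [n.cast_nonneg (α := ℝ)])]
  have hfact : Gamma (n + 1 : ℕ) = n ! := by rw [Nat.cast_add_one, Gamma_nat_eq_factorial]
  have hfact_two : Gamma (2 * (n + 1 : ℕ) - 1) = (2 * n)! := by
    rw [← Gamma_nat_eq_factorial]; push_cast; ring_nf
  have hpow : (2 : ℝ) ^ ((2 * n : ℝ) + t) = 4 ^ n * 2 ^ t := by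
    rw [rpow_add two_pos,
      show (4 : ℝ) ^ n = 2 ^ (2 * n : ℝ) by norm_cast; rw [pow_mul]; norm_num]
  rw [hfact, hfact_two, hpow]
  push_cast
  field_simp
  ring_nf

lemma isProbabilityMeasure_wMeasure {j : ℕ} (hj : 1 ≤ j) :
    IsProbabilityMeasure (wMeasure j) := by
  have h := integral_two_mul_cos_rpow_wMeasure hj neg_one_lt_zero
  simp only [rpow_zero, integral_const, smul_eq_mul, mul_one, add_zero, zero_div] at h
  have hj' : (1 : ℝ) ≤ j := by exact_mod_cast hj
  rw [mul_comm (Gamma _ ^ 2), div_self (mul_ne_zero (Gamma_pos_of_pos (by linarith)).ne'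
    (pow_ne_zero 2 (Gamma_pos_of_pos (by linarith)).ne'))] at h
  exact ⟨(ENNReal.toReal_eq_one_iff _).1 h⟩

theorem statement13_general {j : ℕ} (hj : 1 ≤ j)
    {Ω : Type*} [MeasurableSpace Ω] (P : Measure Ω)
    (β W : Ω → ℝ)
    (hβ : Measure.map β P =
      if j = 1 then Measure.dirac 1 else _root_.betaMeasure j (j - 1 : ℕ))
    (hW : Measure.map W P = wMeasure j)
    (hindep : IndepFun β W P)
    (T : Ω → ℝ)
    (hT : ∀ ω, T ω = Real.log (β ω * (2 * Real.cos (W ω))))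
    (t : ℝ) (ht : -1 < t) :
    ∫ ω, Real.exp (t * T ω) ∂P
      = Real.Gamma j * Real.Gamma (j + t) / Real.Gamma (j + t / 2) ^ 2 := by
  have hj' : (1 : ℝ) ≤ j := by exact_mod_cast hj
  have hβm : AEMeasurable β P :=
    .of_map_ne_zero (hβ ▸ (isProbabilityMeasure_ite_dirac_betaMeasure hj).ne_zero)
  have hWm : AEMeasurable W P := .of_map_ne_zero (hW ▸ (isProbabilityMeasure_wMeasure hj).ne_zero)
  have hβ_pos : ∀ᵐ ω ∂P, 0 < β ω :=
    ae_of_ae_map hβm (hβ ▸ ae_pos_ite_dirac_betaMeasure j)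
  have hW_mem : ∀ᵐ ω ∂P, W ω ∈ Ioo (-(π / 2)) (π / 2) :=
    ae_of_ae_map hWm (hW ▸ ae_mem_wMeasure j)
  have hf : AEStronglyMeasurable (fun x : ℝ => x ^ t) (P.map β) := by fun_prop
  have hg : AEStronglyMeasurable (fun v => (2 * cos v) ^ t) (P.map W) :=
    (by fun_prop : Measurable fun v => (2 * cos v) ^ t).aestronglyMeasurable
  calc ∫ ω, exp (t * T ω) ∂P = ∫ ω, β ω ^ t * (2 * cos (W ω)) ^ t ∂P := by
        refine integral_congr_ae ?_
        filter_upwards [hβ_pos, hW_mem] with ω hβω hWω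
        have hcos := cos_pos_of_mem_Ioo hWω
        rw [hT, ← mul_rpow hβω.le (by positivity), rpow_def_of_pos (by positivity), mul_comm]
    _ = (∫ x, x ^ t ∂P.map β) * ∫ v, (2 * cos v) ^ t ∂P.map W := by
        rw [hindep.integral_fun_comp_mul_comp hβm hWm hf hg, integral_map hβm hf,
          integral_map hWm hg]
    _ = Gamma j * Gamma (j + t) / Gamma (j + t / 2) ^ 2 := by
        rw [hβ, hW, integral_rpow_ite_dirac_betaMeasure hj ht,
          integral_two_mul_cos_rpow_wMeasure hj ht]
        have := (Gamma_pos_of_pos (by linarith : (0 : ℝ) < j)).ne'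
        have := (Gamma_pos_of_pos (by linarith : (0 : ℝ) < 2 * j - 1)).ne'
        have := (Gamma_pos_of_pos (by linarith : (0 : ℝ) < 2 * j - 1 + t)).ne'
        generalize Gamma (j + t / 2) = G
        field_simp

/-- (Laplace transform of `T_j = log(β_{j,j-1} · 2 cos W_j)`), where
`β ~ Beta(j, j-1)` (Dirac mass at `1` for `j = 1`) and independently `W ~ σ_{2(j-1)}`:
`E[e^{tT_j}] = Γ(j)Γ(j+t)/Γ(j+t/2)²` for `t > -1`. -/
theorem statement13 {j : ℕ} (hj : 1 ≤ j)
    {Ω : Type*} [MeasurableSpace Ω] (P : Measure Ω) [IsProbabilityMeasure P]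
    (β W : Ω → ℝ)
    (hβ : Measure.map β P =
      if j = 1 then Measure.dirac 1 else _root_.betaMeasure j (j - 1 : ℕ))
    (hW : Measure.map W P = wMeasure j)
    (hindep : IndepFun β W P)
    (T : Ω → ℝ)
    (hT : ∀ ω, T ω = Real.log (β ω * (2 * Real.cos (W ω))))
    (t : ℝ) (ht : -1 < t) :
    ∫ ω, Real.exp (t * T ω) ∂P
      = Real.Gamma j * Real.Gamma (j + t) / Real.Gamma (j + t / 2) ^ 2 :=
  statement13_general hj P β W hβ hW hindep T hT t ht
end
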